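/- arXiv:2110.13178 — 2 statements merged into one kernel-verified Lean document; each statement's English description precedes it below -/
import Mathlib

section
/- Let A and B be complex d×d matrices with spectral radii s(A), s(B) and operator norms ‖A‖, ‖B‖. Then |s(A) − s(B)| ≤ (‖A‖ + ‖B‖)^{1 − 1/d} · ‖A − B‖^{1/d}. -/
/-!
Elsner's argument. Take an eigenvalue `μ` of `A` with `|μ| = s(A)`, an eigenvector `v`, and put
`M = μ - B`. The eigenvalues of `M` are the `μ - ν` with `ν` an eigenvalue of `B`, so they all have
modulus at least `t = s(A) - s(B)`, whence `t ^ d ≤ |det M|`. On the other hand `|det M|²` is the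
product of the eigenvalues of `Mᴴ M`, each at most `‖M‖²` and the least at most `‖M v‖² / ‖v‖²`
(Rayleigh), so `|det M| ‖v‖ ≤ ‖M v‖ ‖M‖ ^ (d - 1)`. As `M v = (A - B) v` and `‖M‖ ≤ ‖A‖ + ‖B‖`,
this gives `t ^ d ≤ ‖A - B‖ (‖A‖ + ‖B‖) ^ (d - 1)`; exchanging `A` and `B` bounds `|s(A) - s(B)|`.
-/

/-- Operator (spectral / Schatten-∞) norm of a complex matrix. -/
noncomputable def opNorm {d : ℕ} (A : Matrix (Fin d) (Fin d) ℂ) : ℝ :=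
  ‖Matrix.toEuclideanCLM (𝕜 := ℂ) A‖

/-- Spectral radius of a complex matrix. -/
noncomputable def specRad {d : ℕ} (A : Matrix (Fin d) (Fin d) ℂ) : ℝ :=
  (spectralRadius ℂ A).toReal

-- With this norm on matrices, `‖A‖ = opNorm A` holds by definition.
open scoped Matrix.Norms.L2Operator InnerProductSpace ENNReal

lemma Multiset.pow_card_le_norm_prod {K : Type*} [NormedField K] {s : Multiset K} {t : ℝ}
    (ht : 0 ≤ t) (h : ∀ z ∈ s, t ≤ ‖z‖) : t ^ card s ≤ ‖s.prod‖ := by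
  rw [← normHom_apply, map_multiset_prod, ← prod_replicate, ← map_const']
  exact prod_map_le_prod_map₀ _ _ (fun _ _ => ht) h

namespace spectrum

variable {𝕜 A : Type*} [NontriviallyNormedField 𝕜] [NormedRing A] [NormedAlgebra 𝕜 A]
  [CompleteSpace A] [NormOneClass A]

lemma norm_le_toReal_spectralRadius {a : A} {μ : 𝕜} (hμ : μ ∈ spectrum 𝕜 a) :
    ‖μ‖ ≤ (spectralRadius 𝕜 a).toReal := by
  have hfin : spectralRadius 𝕜 a ≠ ∞ :=
    ne_top_of_le_ne_top ENNReal.coe_ne_top (spectralRadius_le_nnnorm a)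
  simpa using ENNReal.toReal_mono hfin (le_iSup₂ (α := ℝ≥0∞) μ hμ)

end spectrum

lemma spectrum.exists_norm_eq_toReal_spectralRadius {A : Type*} [NormedRing A]
    [NormedAlgebra ℂ A] [CompleteSpace A] [Nontrivial A] (a : A) :
    ∃ μ ∈ spectrum ℂ a, ‖μ‖ = (spectralRadius ℂ a).toReal := by
  obtain ⟨μ, hμ, h⟩ := exists_nnnorm_eq_spectralRadius a
  exact ⟨μ, hμ, by simp [← h]⟩

lemma Real.le_rpow_mul_rpow_of_pow_le {t a b : ℝ} {d : ℕ} (hd : 0 < d) (ht : 0 ≤ t) (ha : 0 ≤ a)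
    (hb : 0 ≤ b) (h : t ^ d ≤ a * b ^ (d - 1)) :
    t ≤ b ^ (1 - 1 / d : ℝ) * a ^ (1 / d : ℝ) := by
  calc t = (t ^ d) ^ (1 / d : ℝ) := by rw [one_div, Real.pow_rpow_inv_natCast ht hd.ne']
    _ ≤ (a * b ^ (d - 1)) ^ (1 / d : ℝ) := by gcongr
    _ = b ^ (1 - 1 / d : ℝ) * a ^ (1 / d : ℝ) := by
      rw [Real.mul_rpow ha (by positivity), mul_comm, ← Real.rpow_natCast,
        ← Real.rpow_mul hb, Nat.cast_pred hd]
      congr 2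
      field_simp

namespace Matrix

lemma pow_card_le_norm_det {K : Type*} [NormedField K] [IsAlgClosed K] {n : Type*} [Fintype n]
    [DecidableEq n] (M : Matrix n n K) {t : ℝ} (ht : 0 ≤ t) (h : ∀ μ ∈ spectrum K M, t ≤ ‖μ‖) :
    t ^ Fintype.card n ≤ ‖M.det‖ := by
  rw [det_eq_prod_roots_charpoly, ← M.charpoly_natDegree_eq_dim,
    (IsAlgClosed.splits (k := K) M.charpoly).natDegree_eq_card_roots]
  refine Multiset.pow_card_le_norm_prod ht fun μ hμ => h μ ?_
  exact mem_spectrum_iff_isRoot_charpoly.mpr (Polynomial.isRoot_of_mem_roots hμ)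

section RCLike

variable {𝕜 : Type*} [RCLike 𝕜] {n : Type*} [Fintype n] [DecidableEq n]

lemma eigenvalues_conjTranspose_mul_self_le (M : Matrix n n 𝕜) (i : n) :
    (isHermitian_conjTranspose_mul_self M).eigenvalues i ≤ ‖M‖ ^ 2 := by
  have : Nonempty n := ⟨i⟩
  have hmem := (isHermitian_conjTranspose_mul_self M).eigenvalues_mem_spectrum_real i
  rw [← spectrum.algebraMap_mem_iff 𝕜] at hmem
  calc _ ≤ ‖(algebraMap ℝ 𝕜 _)‖ := by simpa using le_abs_self _
    _ ≤ ‖Mᴴ * M‖ := spectrum.norm_le_norm_of_mem hmem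
    _ = ‖M‖ ^ 2 := by rw [l2_opNorm_conjTranspose_mul_self, sq]

lemma re_inner_conjTranspose_mul_self (M : Matrix n n 𝕜) (x : EuclideanSpace 𝕜 n) :
    RCLike.re ⟪toEuclideanLin (Mᴴ * M) x, x⟫_𝕜 = ‖toEuclideanCLM (𝕜 := 𝕜) M x‖ ^ 2 := by
  rw [toLpLin_mul, toEuclideanLin_conjTranspose_eq_adjoint, LinearMap.comp_apply,
    LinearMap.adjoint_inner_left, inner_self_eq_norm_sq]
  rfl

lemma exists_eigenvalues_conjTranspose_mul_self_le (M : Matrix n n 𝕜) {x : EuclideanSpace 𝕜 n}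
    (hx : x ≠ 0) :
    ∃ i, (isHermitian_conjTranspose_mul_self M).eigenvalues i * ‖x‖ ^ 2 ≤
      ‖toEuclideanCLM (𝕜 := 𝕜) M x‖ ^ 2 := by
  have : Nontrivial (EuclideanSpace 𝕜 n) := nontrivial_of_ne x 0 hx
  have hH := isHermitian_conjTranspose_mul_self M
  have hmem :=
    (isSymmetric_toEuclideanLin_iff.mpr hH).hasEigenvalue_iInf_of_finiteDimensional.mem_spectrum
  rw [spectrum_toLpLin, ← RCLike.algebraMap_eq_ofReal, spectrum.algebraMap_mem_iff,
    hH.spectrum_real_eq_range_eigenvalues] at hmem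
  obtain ⟨i, hi⟩ := hmem
  refine ⟨i, ?_⟩
  rw [hi, ← le_div_iff₀ (by positivity), ← re_inner_conjTranspose_mul_self]
  refine ciInf_le ⟨0, ?_⟩ (⟨x, hx⟩ : {x : EuclideanSpace 𝕜 n // x ≠ 0})
  rintro _ ⟨v, rfl⟩
  dsimp only
  rw [re_inner_conjTranspose_mul_self]
  positivity

lemma sq_norm_det_eq_prod_eigenvalues_conjTranspose_mul_self (M : Matrix n n 𝕜) :
    ‖M.det‖ ^ 2 = ∏ i, (isHermitian_conjTranspose_mul_self M).eigenvalues i := by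
  have h := (isHermitian_conjTranspose_mul_self M).det_eq_prod_eigenvalues
  rw [det_mul, det_conjTranspose, RCLike.star_def, RCLike.conj_mul] at h
  exact_mod_cast h

lemma norm_det_mul_norm_le (M : Matrix n n 𝕜) (x : EuclideanSpace 𝕜 n) :
    ‖M.det‖ * ‖x‖ ≤ ‖toEuclideanCLM (𝕜 := 𝕜) M x‖ * ‖M‖ ^ (Fintype.card n - 1) := by
  rcases eq_or_ne x 0 with rfl | hx
  · simp
  set e := (isHermitian_conjTranspose_mul_self M).eigenvalues
  have he : ∀ i, 0 ≤ e i := eigenvalues_conjTranspose_mul_self_nonneg M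
  obtain ⟨i₀, hi₀⟩ := exists_eigenvalues_conjTranspose_mul_self_le M hx
  have hrest : ∏ i ∈ Finset.univ.erase i₀, e i ≤ (‖M‖ ^ 2) ^ (Fintype.card n - 1) := by
    rw [← Finset.card_univ, ← Finset.card_erase_of_mem (Finset.mem_univ i₀), ← Finset.prod_const]
    exact Finset.prod_le_prod (fun i _ => he i)
      (fun i _ => eigenvalues_conjTranspose_mul_self_le M i)
  refine le_of_pow_le_pow_left₀ two_ne_zero (by positivity) ?_
  calc (‖M.det‖ * ‖x‖) ^ 2 = e i₀ * ‖x‖ ^ 2 * ∏ i ∈ Finset.univ.erase i₀, e i := by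
        rw [mul_pow, sq_norm_det_eq_prod_eigenvalues_conjTranspose_mul_self,
          ← Finset.mul_prod_erase _ _ (Finset.mem_univ i₀)]
        ring
    _ ≤ ‖toEuclideanCLM (𝕜 := 𝕜) M x‖ ^ 2 * (‖M‖ ^ 2) ^ (Fintype.card n - 1) :=
        mul_le_mul hi₀ hrest (Finset.prod_nonneg fun i _ => he i) (by positivity)
    _ = _ := by ring

lemma exists_ne_zero_toEuclideanCLM_eq_smul {A : Matrix n n 𝕜} {μ : 𝕜} (hμ : μ ∈ spectrum 𝕜 A) :
    ∃ v : EuclideanSpace 𝕜 n, v ≠ 0 ∧ toEuclideanCLM (𝕜 := 𝕜) A v = μ • v := by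
  rw [← spectrum_toLpLin 2, ← Module.End.hasEigenvalue_iff_mem_spectrum] at hμ
  obtain ⟨v, hv⟩ := hμ.exists_hasEigenvector
  exact ⟨v, hv.2, hv.apply_eq_smul⟩

end RCLike

lemma toReal_spectralRadius_sub_le {n : Type*} [Fintype n] [DecidableEq n] [Nonempty n]
    (A B : Matrix n n ℂ) :
    (spectralRadius ℂ A).toReal - (spectralRadius ℂ B).toReal ≤
      (‖A‖ + ‖B‖) ^ (1 - 1 / Fintype.card n : ℝ) * ‖A - B‖ ^ (1 / Fintype.card n : ℝ) := by
  set t := (spectralRadius ℂ A).toReal - (spectralRadius ℂ B).toReal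
  rcases le_or_gt t 0 with ht | ht
  · exact ht.trans (by positivity)
  obtain ⟨μ, hμA, hμ⟩ := spectrum.exists_norm_eq_toReal_spectralRadius A
  obtain ⟨v, hv, hAv⟩ := exists_ne_zero_toEuclideanCLM_eq_smul hμA
  set M := algebraMap ℂ _ μ - B
  have hspec : ∀ ν ∈ spectrum ℂ M, t ≤ ‖ν‖ := by
    rw [← spectrum.singleton_sub_eq, Set.singleton_sub]
    rintro _ ⟨ν, hν, rfl⟩
    have := spectrum.norm_le_toReal_spectralRadius hν
    have := norm_sub_norm_le μ ν
    linarith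
  have hMv : toEuclideanCLM (𝕜 := ℂ) M v = toEuclideanCLM (𝕜 := ℂ) (A - B) v := by
    simp [M, hAv, Algebra.algebraMap_eq_smul_one]
  have hM : ‖M‖ ≤ ‖A‖ + ‖B‖ := by
    refine (norm_sub_le _ _).trans (add_le_add_left ?_ _)
    rw [norm_algebraMap']
    exact spectrum.norm_le_norm_of_mem hμA
  refine Real.le_rpow_mul_rpow_of_pow_le Fintype.card_pos ht.le (norm_nonneg _) (by positivity) ?_
  refine le_of_mul_le_mul_right ?_ (norm_pos_iff.mpr hv)
  calc t ^ Fintype.card n * ‖v‖ ≤ ‖M.det‖ * ‖v‖ := by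
        gcongr
        exact pow_card_le_norm_det M ht.le hspec
    _ ≤ ‖toEuclideanCLM (𝕜 := ℂ) (A - B) v‖ * ‖M‖ ^ (Fintype.card n - 1) := by
        rw [← hMv]
        exact norm_det_mul_norm_le M v
    _ ≤ ‖A - B‖ * ‖v‖ * (‖A‖ + ‖B‖) ^ (Fintype.card n - 1) := by
        gcongr
        exact (toEuclideanCLM (𝕜 := ℂ) (A - B)).le_opNorm v
    _ = ‖A - B‖ * (‖A‖ + ‖B‖) ^ (Fintype.card n - 1) * ‖v‖ := by ring

end Matrix

/-- |s(A) − s(B)| ≤ (‖A‖ + ‖B‖)^{1 − 1/d} · ‖A − B‖^{1/d}. -/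
theorem spectral_radius_difference_bound {d : ℕ} (hd : 0 < d)
    (A B : Matrix (Fin d) (Fin d) ℂ) :
    |specRad A - specRad B| ≤
      (opNorm A + opNorm B) ^ ((1 : ℝ) - 1 / d) * opNorm (A - B) ^ ((1 : ℝ) / d) := by
  have : Nonempty (Fin d) := ⟨⟨0, hd⟩⟩
  have hAB := Matrix.toReal_spectralRadius_sub_le A B
  have hBA := Matrix.toReal_spectralRadius_sub_le B A
  rw [Fintype.card_fin] at hAB hBA
  rw [norm_sub_rev, add_comm ‖B‖] at hBA
  exact abs_sub_le_iff.mpr ⟨hAB, hBA⟩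
end

section
/- Let S ⊂ U(d) be a finite set of unitaries forming a unitary 2-design, and let Λ be a unital quantum channel on M_d(ℂ) with average fidelities F(C,Λ) = (d·F_e(C†∘Λ) + 1)/(d+1) where F_e is the entanglement fidelity. Then Λ = (1/|S|) Σ_{C∈S} (D·F(C,Λ) − D/d + 1)·ω(C), where D = d(d+1)(d²−1) and ω(C) is the channel X ↦ C X C†. (Equivalently: a unital channel is determined linearly by its average gate fidelities relative to a unitary 2-design.) -/
open scoped Matrix Kronecker ComplexOrder

/-- Unnormalized Choi matrix of a superoperator. -/
noncomputable def choi {n : Type*} [Fintype n] [DecidableEq n]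
    (Φ : Matrix n n ℂ →ₗ[ℂ] Matrix n n ℂ) : Matrix (n × n) (n × n) ℂ :=
  Matrix.of fun p q => (Φ (Matrix.single p.1 q.1 1)) p.2 q.2

/-- The swap (flip) operator on ℂ^d ⊗ ℂ^d. -/
noncomputable def swapMatrix (d : ℕ) : Matrix (Fin d × Fin d) (Fin d × Fin d) ℂ :=
  Matrix.of fun p q => if p.1 = q.2 ∧ p.2 = q.1 then 1 else 0

/-- Entanglement fidelity F_e(C† ∘ Λ) = (1/d²) Σ_{ij} (Cᴴ Λ(E_ij) C)_{ij}. -/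
noncomputable def entFid {d : ℕ}
    (Λ : Matrix (Fin d) (Fin d) ℂ →ₗ[ℂ] Matrix (Fin d) (Fin d) ℂ)
    (C : Matrix (Fin d) (Fin d) ℂ) : ℂ :=
  ((d : ℂ) ^ 2)⁻¹ *
    ∑ i : Fin d, ∑ j : Fin d, (Cᴴ * Λ (Matrix.single i j 1) * C) i j

/-- Average gate fidelity F(C,Λ) = (d·F_e(C†∘Λ) + 1)/(d + 1). -/
noncomputable def avgFid {d : ℕ}
    (Λ : Matrix (Fin d) (Fin d) ℂ →ₗ[ℂ] Matrix (Fin d) (Fin d) ℂ)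
    (C : Matrix (Fin d) (Fin d) ℂ) : ℂ :=
  ((d : ℂ) * entFid Λ C + 1) / ((d : ℂ) + 1)

/-!
The weight of `C` equals `(d² - 1) f(C) - (d² - 2)` with `f(C) = d² F_e(C† ∘ Λ)` (`unnormEntFid`).
The matrix `f(C) • C X C†` is a partial trace of `(C ⊗ C)(E_ca ⊗ X)(C ⊗ C)†` against
`Λ(E_ac) ⊗ 1`, summed over `a, c`, so the 2-design identity evaluates its average over `S` exactly;
for a trace-preserving unital `Λ` it is `(tr X / d) 1 + (Λ X - (tr X / d) 1) / (d² - 1)`. The same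
identity applied to `Φ = tr(·) 1`, whose `f` is `tr (C† C) = d` on unitaries, gives the 1-design
average `(tr X / d) 1` of `C X C†`, and the weighted combination of the two averages is `Λ X`.
-/

open Matrix

section Contraction

variable {n : Type*} [Fintype n]

/-- `contractFst A N = Tr₁[N (A ⊗ 1)]`, the partial trace over the first tensor factor. -/
noncomputable def contractFst (A : Matrix n n ℂ) :
    Matrix (n × n) (n × n) ℂ →ₗ[ℂ] Matrix n n ℂ where
  toFun N := Matrix.of fun k l => ∑ b, ∑ e, A b e * N (e, k) (b, l)
  map_add' N N' := by
    ext k l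
    simp [mul_add, Finset.sum_add_distrib]
  map_smul' c N := by
    ext k l
    simp [Finset.mul_sum, mul_left_comm]

theorem contractFst_kronecker (A P Q : Matrix n n ℂ) :
    contractFst A (P ⊗ₖ Q) = (A * P).trace • Q := by
  ext k l
  simp [contractFst, trace, mul_apply, Finset.sum_mul, mul_assoc]

theorem contractFst_one [DecidableEq n] (A : Matrix n n ℂ) :
    contractFst A 1 = A.trace • 1 := by
  ext k l
  by_cases hkl : k = l <;> simp [contractFst, trace, one_apply, hkl]

theorem contractFst_swapMatrix {d : ℕ} (A : Matrix (Fin d) (Fin d) ℂ) :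
    contractFst A (swapMatrix d) = A := by
  ext k l
  simp [contractFst, swapMatrix, ite_and]

end Contraction

theorem trace_swapMatrix_mul_kronecker {d : ℕ} (P Q : Matrix (Fin d) (Fin d) ℂ) :
    (swapMatrix d * (P ⊗ₖ Q)).trace = (P * Q).trace := by
  simp only [trace, swapMatrix, ite_and, diag_apply, mul_apply, of_apply, kroneckerMap_apply,
    ite_mul, one_mul, zero_mul, Fintype.sum_prod_type, Finset.sum_ite_eq, Finset.mem_univ,
    ↓reduceIte]
  exact Finset.sum_comm

theorem natCast_sq_sub_one_ne_zero {d : ℕ} (hd : 2 ≤ d) : (d : ℂ) ^ 2 - 1 ≠ 0 := by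
  rw [sub_ne_zero]
  norm_cast
  nlinarith

section Superoperator

variable {n : Type*} [Fintype n] [DecidableEq n]

theorem sum_smul_map_single {R M : Type*} [CommSemiring R] [AddCommMonoid M] [Module R M]
    (Φ : Matrix n n R →ₗ[R] M) (Y : Matrix n n R) :
    ∑ a, ∑ c, Y a c • Φ (single a c 1) = Φ Y := by
  conv_rhs => rw [matrix_eq_sum_single Y]
  simp [map_sum, ← map_smul]

noncomputable def unnormEntFid (Φ : Matrix n n ℂ →ₗ[ℂ] Matrix n n ℂ) (C : Matrix n n ℂ) : ℂ :=
  ∑ i, ∑ j, (Cᴴ * Φ (single i j 1) * C) i j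

theorem trace_mul_conj_single (A C : Matrix n n ℂ) (a c : n) :
    (A * (C * single c a 1 * Cᴴ)).trace = (Cᴴ * A * C) a c := by
  rw [← Matrix.mul_assoc, ← Matrix.mul_assoc, trace_mul_comm, ← Matrix.mul_assoc,
    ← Matrix.mul_assoc, trace_mul_single]
  simp

theorem unnormEntFid_smul_conj (Φ : Matrix n n ℂ →ₗ[ℂ] Matrix n n ℂ) (C X : Matrix n n ℂ) :
    unnormEntFid Φ C • (C * X * Cᴴ) = ∑ a, ∑ c,
      contractFst (Φ (single a c 1)) ((C ⊗ₖ C) * (single c a 1 ⊗ₖ X) * (C ⊗ₖ C)ᴴ) := by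
  simp only [conjTranspose_kronecker, ← mul_kronecker_mul, contractFst_kronecker,
    trace_mul_conj_single, unnormEntFid, Finset.sum_smul]

end Superoperator

noncomputable def twirl {n : Type*} [Fintype n] (S : Finset (Matrix n n ℂ))
    (M : Matrix (n × n) (n × n) ℂ) : Matrix (n × n) (n × n) ℂ :=
  (S.card : ℂ)⁻¹ • ∑ C ∈ S, (C ⊗ₖ C) * M * (C ⊗ₖ C)ᴴ

section TwoDesign

variable {d : ℕ}

/-- The right-hand side is the Haar average of `(U ⊗ U) M (U ⊗ U)ᴴ`, expanded in the basis
`{1, swap}` of the commutant of `U ⊗ U`. -/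
def IsTwoDesign (S : Finset (Matrix (Fin d) (Fin d) ℂ)) : Prop :=
  ∀ M, twirl S M = (((d : ℂ) ^ 2 * M.trace - (d : ℂ) * (swapMatrix d * M).trace) /
      ((d : ℂ) ^ 2 * ((d : ℂ) ^ 2 - 1))) • (1 : Matrix (Fin d × Fin d) (Fin d × Fin d) ℂ)
    + (((d : ℂ) ^ 2 * (swapMatrix d * M).trace - (d : ℂ) * M.trace) /
      ((d : ℂ) ^ 2 * ((d : ℂ) ^ 2 - 1))) • swapMatrix d

noncomputable def twirlOneCoeff (X : Matrix (Fin d) (Fin d) ℂ) : Matrix (Fin d) (Fin d) ℂ :=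
  ((d : ℂ) ^ 2 * ((d : ℂ) ^ 2 - 1))⁻¹ • (((d : ℂ) ^ 2 * X.trace) • 1 - (d : ℂ) • X)

noncomputable def twirlSwapCoeff (X : Matrix (Fin d) (Fin d) ℂ) : Matrix (Fin d) (Fin d) ℂ :=
  ((d : ℂ) ^ 2 * ((d : ℂ) ^ 2 - 1))⁻¹ • ((d : ℂ) ^ 2 • X - ((d : ℂ) * X.trace) • 1)

variable {S : Finset (Matrix (Fin d) (Fin d) ℂ)}

theorem IsTwoDesign.twirl_single_kronecker (h : IsTwoDesign S) (a c : Fin d)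
    (X : Matrix (Fin d) (Fin d) ℂ) :
    twirl S (single c a 1 ⊗ₖ X) =
      twirlOneCoeff X a c • 1 + twirlSwapCoeff X a c • swapMatrix d := by
  have htrace : (single c a (1 : ℂ)).trace = (1 : Matrix (Fin d) (Fin d) ℂ) a c := by
    simpa using trace_mul_single (1 : Matrix (Fin d) (Fin d) ℂ) c a 1
  rw [h, trace_swapMatrix_mul_kronecker, trace_kronecker, trace_single_mul, htrace]
  simp only [twirlOneCoeff, twirlSwapCoeff, Matrix.smul_apply, Matrix.sub_apply, smul_eq_mul,
    div_eq_inv_mul]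
  congr 2 <;> ring

theorem IsTwoDesign.twirl_unnormEntFid (h : IsTwoDesign S)
    (Φ : Matrix (Fin d) (Fin d) ℂ →ₗ[ℂ] Matrix (Fin d) (Fin d) ℂ) (X : Matrix (Fin d) (Fin d) ℂ) :
    (S.card : ℂ)⁻¹ • ∑ C ∈ S, unnormEntFid Φ C • (C * X * Cᴴ) =
      (Φ (twirlOneCoeff X)).trace • 1 + Φ (twirlSwapCoeff X) :=
  calc (S.card : ℂ)⁻¹ • ∑ C ∈ S, unnormEntFid Φ C • (C * X * Cᴴ)
      = ∑ a, ∑ c, contractFst (Φ (single a c 1)) (twirl S (single c a 1 ⊗ₖ X)) := by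
        simp only [unnormEntFid_smul_conj, twirl, map_smul, map_sum, Finset.smul_sum]
        rw [Finset.sum_comm]
        exact Finset.sum_congr rfl fun a _ => Finset.sum_comm
    _ = ∑ a, ∑ c, ((twirlOneCoeff X a c * (Φ (single a c 1)).trace) • 1
          + twirlSwapCoeff X a c • Φ (single a c 1)) := by
        simp only [h.twirl_single_kronecker, map_add, map_smul, contractFst_one,
          contractFst_swapMatrix, smul_smul]
    _ = (Φ (twirlOneCoeff X)).trace • 1 + Φ (twirlSwapCoeff X) := by
        simp only [Finset.sum_add_distrib, ← Finset.sum_smul, sum_smul_map_single]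
        congr 2
        simpa using sum_smul_map_single (traceLinearMap (Fin d) ℂ ℂ ∘ₗ Φ) (twirlOneCoeff X)

theorem IsTwoDesign.twirl_conj (h : IsTwoDesign S) (hd : 2 ≤ d)
    (hU : ∀ C ∈ S, Cᴴ * C = 1) (X : Matrix (Fin d) (Fin d) ℂ) :
    (S.card : ℂ)⁻¹ • ∑ C ∈ S, C * X * Cᴴ = (X.trace / d) • 1 := by
  have hd0 : (d : ℂ) ≠ 0 := by norm_cast; omega
  have hd1 := natCast_sq_sub_one_ne_zero hd
  set Φ := (traceLinearMap (Fin d) ℂ ℂ).smulRight (1 : Matrix (Fin d) (Fin d) ℂ)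
  have hfid : ∀ C ∈ S, unnormEntFid Φ C = d := fun C hC => by
    calc unnormEntFid Φ C = ∑ i, ∑ j, (single i j (1 : ℂ)).trace * (Cᴴ * C) i j := by
          simp [unnormEntFid, Φ]
      _ = (Cᴴ * C).trace := Finset.sum_congr rfl fun i _ => by
          rw [Fintype.sum_eq_single i fun j hj => by
            simp [trace_single_eq_of_ne i j (1 : ℂ) hj.symm]]
          simp
      _ = d := by simp [hU C hC]
  have key := h.twirl_unnormEntFid Φ X
  rw [Finset.sum_congr rfl fun C hC => by rw [hfid C hC], ← Finset.smul_sum, smul_comm] at key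
  rw [← inv_smul_smul₀ hd0 ((S.card : ℂ)⁻¹ • ∑ C ∈ S, C * X * Cᴴ), key]
  simp only [Φ, twirlOneCoeff, twirlSwapCoeff, LinearMap.smulRight_apply, traceLinearMap_apply,
    trace_smul, trace_sub, trace_one, Fintype.card_fin, smul_eq_mul]
  match_scalars
  field_simp
  ring

theorem IsTwoDesign.twirl_unnormEntFid_of_unital (h : IsTwoDesign S) (hd : 2 ≤ d)
    (Λ : Matrix (Fin d) (Fin d) ℂ →ₗ[ℂ] Matrix (Fin d) (Fin d) ℂ)
    (hTP : ∀ X, (Λ X).trace = X.trace) (hunital : Λ 1 = 1) (X : Matrix (Fin d) (Fin d) ℂ) :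
    (S.card : ℂ)⁻¹ • ∑ C ∈ S, unnormEntFid Λ C • (C * X * Cᴴ) =
      (X.trace / d) • 1 + ((d : ℂ) ^ 2 - 1)⁻¹ • (Λ X - (X.trace / d) • 1) := by
  have hd0 : (d : ℂ) ≠ 0 := by norm_cast; omega
  have hd1 := natCast_sq_sub_one_ne_zero hd
  simp only [h.twirl_unnormEntFid, twirlOneCoeff, twirlSwapCoeff, map_smul, map_sub, hTP,
    hunital, trace_smul, trace_sub, trace_one, Fintype.card_fin, smul_eq_mul]
  match_scalars <;> field_simp

end TwoDesign

theorem avgFid_weight_eq {d : ℕ} (hd : d ≠ 0)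
    (Λ : Matrix (Fin d) (Fin d) ℂ →ₗ[ℂ] Matrix (Fin d) (Fin d) ℂ) (C : Matrix (Fin d) (Fin d) ℂ) :
    ((d : ℂ) * ((d : ℂ) + 1) * ((d : ℂ) ^ 2 - 1)) * avgFid Λ C
        - ((d : ℂ) * ((d : ℂ) + 1) * ((d : ℂ) ^ 2 - 1)) / (d : ℂ) + 1
      = ((d : ℂ) ^ 2 - 1) * unnormEntFid Λ C - ((d : ℂ) ^ 2 - 2) := by
  have hd0 : (d : ℂ) ≠ 0 := by exact_mod_cast hd
  have hd1 : (d : ℂ) + 1 ≠ 0 := by norm_cast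
  have hentFid : entFid Λ C = ((d : ℂ) ^ 2)⁻¹ * unnormEntFid Λ C := rfl
  rw [avgFid, hentFid]
  field_simp
  ring

theorem unital_channel_reconstruction_from_two_design_general {d : ℕ} (hd : 2 ≤ d)
    (S : Finset (Matrix (Fin d) (Fin d) ℂ))
    (hSU : ∀ C ∈ S, Cᴴ * C = 1 ∧ C * Cᴴ = 1)
    (hdesign : ∀ M : Matrix (Fin d × Fin d) (Fin d × Fin d) ℂ,
      (S.card : ℂ)⁻¹ • ∑ C ∈ S, (C ⊗ₖ C) * M * (C ⊗ₖ C)ᴴ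
        = (((d : ℂ) ^ 2 * M.trace - (d : ℂ) * (swapMatrix d * M).trace) /
            ((d : ℂ) ^ 2 * ((d : ℂ) ^ 2 - 1))) • (1 : Matrix (Fin d × Fin d) (Fin d × Fin d) ℂ)
          + (((d : ℂ) ^ 2 * (swapMatrix d * M).trace - (d : ℂ) * M.trace) /
            ((d : ℂ) ^ 2 * ((d : ℂ) ^ 2 - 1))) • swapMatrix d)
    (Λ : Matrix (Fin d) (Fin d) ℂ →ₗ[ℂ] Matrix (Fin d) (Fin d) ℂ)
    (hTP : ∀ X, (Λ X).trace = X.trace)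
    (hunital : Λ 1 = 1) :
    ∀ X : Matrix (Fin d) (Fin d) ℂ,
      Λ X = (S.card : ℂ)⁻¹ •
        ∑ C ∈ S,
          (((d : ℂ) * ((d : ℂ) + 1) * ((d : ℂ) ^ 2 - 1)) * avgFid Λ C
              - ((d : ℂ) * ((d : ℂ) + 1) * ((d : ℂ) ^ 2 - 1)) / (d : ℂ) + 1) •
            (C * X * Cᴴ) := by
  intro X
  have h : IsTwoDesign S := hdesign
  have hd0 : (d : ℂ) ≠ 0 := by norm_cast; omega
  have hd1 := natCast_sq_sub_one_ne_zero hd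
  calc Λ X = ((d : ℂ) ^ 2 - 1) • ((S.card : ℂ)⁻¹ • ∑ C ∈ S, unnormEntFid Λ C • (C * X * Cᴴ))
        - ((d : ℂ) ^ 2 - 2) • ((S.card : ℂ)⁻¹ • ∑ C ∈ S, C * X * Cᴴ) := by
        rw [h.twirl_unnormEntFid_of_unital hd Λ hTP hunital,
          h.twirl_conj hd (fun C hC => (hSU C hC).1)]
        match_scalars <;> field_simp
        ring
    _ = _ := by
        simp only [Finset.smul_sum, ← Finset.sum_sub_distrib, avgFid_weight_eq (by omega : d ≠ 0)]
        exact Finset.sum_congr rfl fun C _ => by module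

/-- A unital quantum channel is determined linearly by its average gate
fidelities relative to a unitary 2-design:
Λ = (1/|S|) Σ_{C∈S} (D·F(C,Λ) − D/d + 1)·ω(C) with D = d(d+1)(d²−1). -/
theorem unital_channel_reconstruction_from_two_design {d : ℕ} (hd : 2 ≤ d)
    (S : Finset (Matrix (Fin d) (Fin d) ℂ)) (hSne : S.Nonempty)
    (hSU : ∀ C ∈ S, Cᴴ * C = 1 ∧ C * Cᴴ = 1)
    (hdesign : ∀ M : Matrix (Fin d × Fin d) (Fin d × Fin d) ℂ,
      (S.card : ℂ)⁻¹ • ∑ C ∈ S, (C ⊗ₖ C) * M * (C ⊗ₖ C)ᴴ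
        = (((d : ℂ) ^ 2 * M.trace - (d : ℂ) * (swapMatrix d * M).trace) /
            ((d : ℂ) ^ 2 * ((d : ℂ) ^ 2 - 1))) • (1 : Matrix (Fin d × Fin d) (Fin d × Fin d) ℂ)
          + (((d : ℂ) ^ 2 * (swapMatrix d * M).trace - (d : ℂ) * M.trace) /
            ((d : ℂ) ^ 2 * ((d : ℂ) ^ 2 - 1))) • swapMatrix d)
    (Λ : Matrix (Fin d) (Fin d) ℂ →ₗ[ℂ] Matrix (Fin d) (Fin d) ℂ)
    (hCP : (choi Λ).PosSemidef)
    (hTP : ∀ X, (Λ X).trace = X.trace)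
    (hunital : Λ 1 = 1) :
    ∀ X : Matrix (Fin d) (Fin d) ℂ,
      Λ X = (S.card : ℂ)⁻¹ •
        ∑ C ∈ S,
          (((d : ℂ) * ((d : ℂ) + 1) * ((d : ℂ) ^ 2 - 1)) * avgFid Λ C
              - ((d : ℂ) * ((d : ℂ) + 1) * ((d : ℂ) ^ 2 - 1)) / (d : ℂ) + 1) •
            (C * X * Cᴴ) :=
  unital_channel_reconstruction_from_two_design_general hd S hSU hdesign Λ hTP hunital
end
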